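/- Let U_n = P_n □ Q_k be the Cartesian product of the n-vertex path P_n = a_1...a_n with the k-dimensional hypercube Q_k. Then for any two vertices b_i, b_j of Q_k, lim_{n→∞} (R_{U_{n+1}}[(a_1,b_i),(a_{n+1},b_j)] − R_{U_n}[(a_1,b_i),(a_n,b_j)]) = 1/2^k. -/

import Mathlib

/-!
The resistance distance between `u` and `v` is `w u - w v` for any potential `w` with
`L w = e_u - e_v`, because `L L⁺ L = L` and `L` is symmetric (the spectral theorem provides
`L⁺`). On `P_{n+1} □ Q_k` such a
potential is found by expanding in the Walsh characters `χ_s` of `Q_k`, which are eigenvectors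
of its Laplacian with eigenvalue `2|s|`: the coefficient of `χ_s` solves
`(L_P + 2|s|) φ = χ_s(b_i) δ_0 - χ_s(b_j) δ_n` on the path. For `s = 0` the solution is linear
and contributes `n`; for `s ≠ 0` it is a combination of `r^x` and `r^(-x)` with
`r + r⁻¹ = 2 + 2|s|`, whose values at the two ends converge as `n → ∞`. Hence
`R_n - n / 2^k` converges, and the successive differences tend to `1 / 2^k`.
-/

open Matrix Finset

open Classical in
/-- The Moore–Penrose pseudoinverse of a real square matrix, defined via the
four Penrose conditions (it is unique when it exists). -/
noncomputable def Matrix.mpinv {m : Type*} [Fintype m] [DecidableEq m]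
    (A : Matrix m m ℝ) : Matrix m m ℝ :=
  if h : ∃ B : Matrix m m ℝ,
      A * B * A = A ∧ B * A * B = B ∧ (A * B)ᵀ = A * B ∧ (B * A)ᵀ = B * A
  then h.choose else 0

/-- Effective resistance between `u` and `v` with respect to a (weighted)
Laplacian matrix `L`:  `(e_u - e_v)ᵀ L⁺ (e_u - e_v)`. -/
noncomputable def effRes {m : Type*} [Fintype m] [DecidableEq m]
    (L : Matrix m m ℝ) (u v : m) : ℝ :=
  (Pi.single u 1 - Pi.single v 1) ⬝ᵥ (L.mpinv *ᵥ (Pi.single u 1 - Pi.single v 1))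

/-- The (real) Laplacian matrix of a simple graph. -/
noncomputable def lapm {V : Type*} [Fintype V] [DecidableEq V]
    (G : SimpleGraph V) : Matrix V V ℝ :=
  letI := Classical.decRel G.Adj
  G.lapMatrix ℝ

/-- Resistance distance between two vertices of a simple graph. -/
noncomputable def resDist {V : Type*} [Fintype V] [DecidableEq V]
    (G : SimpleGraph V) (u v : V) : ℝ :=
  effRes (lapm G) u v

/-- Resistance diameter of a simple graph. -/
noncomputable def resDiam {V : Type*} [Fintype V] [DecidableEq V]
    (G : SimpleGraph V) : ℝ :=
  ⨆ p : V × V, resDist G p.1 p.2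

/-- The weighted Laplacian of the cone over `G` with apex `Sum.inr ()`:
edges of `G` have conductance `1` (unit resistance), and each vertex of `G`
is joined to the apex by an edge of conductance `m` (resistance `1/m`). -/
noncomputable def coneLap {V : Type*} [Fintype V] [DecidableEq V]
    (G : SimpleGraph V) (m : ℝ) : Matrix (V ⊕ Unit) (V ⊕ Unit) ℝ :=
  letI := Classical.decRel G.Adj
  let W : Matrix (V ⊕ Unit) (V ⊕ Unit) ℝ := fun i j =>
    match i, j with
    | Sum.inl a, Sum.inl b => if G.Adj a b then 1 else 0
    | Sum.inl _, Sum.inr _ => m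
    | Sum.inr _, Sum.inl _ => m
    | Sum.inr _, Sum.inr _ => 0
  Matrix.of fun i j => (if i = j then ∑ k, W i k else 0) - W i j

/-- The `k`-dimensional hypercube graph `Q_k`. -/
def hypercube (k : ℕ) : SimpleGraph (Fin k → Bool) where
  Adj x y := (Finset.univ.filter fun i => x i ≠ y i).card = 1
  symm := by
    constructor
    intro x y h
    rw [← h]
    congr 1
    ext i
    simp [ne_comm]
  loopless := by constructor; intro x; simp

/-- The join `G + H` of two graphs on disjoint vertex sets. -/
def graphJoin {V W : Type*} (G : SimpleGraph V) (H : SimpleGraph W) :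
    SimpleGraph (V ⊕ W) where
  Adj x y :=
    match x, y with
    | Sum.inl a, Sum.inl b => G.Adj a b
    | Sum.inr a, Sum.inr b => H.Adj a b
    | Sum.inl _, Sum.inr _ => True
    | Sum.inr _, Sum.inl _ => True
  symm := by
    constructor
    rintro (a | a) (b | b) h
    · exact G.symm.symm _ _ h
    · trivial
    · trivial
    · exact H.symm.symm _ _ h
  loopless := by
    constructor
    rintro (a | a) h
    · exact G.loopless.irrefl a h
    · exact H.loopless.irrefl a h

open Filter Topology

theorem Matrix.exists_penrose_of_transpose_eq {m : Type*} [Fintype m] [DecidableEq m]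
    {A : Matrix m m ℝ} (hA : Aᵀ = A) :
    ∃ B : Matrix m m ℝ,
      A * B * A = A ∧ B * A * B = B ∧ (A * B)ᵀ = A * B ∧ (B * A)ᵀ = B * A := by
  obtain ⟨U, d, hU, rfl⟩ :
      ∃ (U : Matrix m m ℝ) (d : m → ℝ), Uᵀ * U = 1 ∧ A = U * diagonal d * Uᵀ := by
    have hH : A.IsHermitian := by rwa [IsHermitian, conjTranspose_eq_transpose_of_trivial]
    refine ⟨hH.eigenvectorUnitary, hH.eigenvalues,
      Unitary.coe_star_mul_self hH.eigenvectorUnitary, ?_⟩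
    conv_lhs => rw [hH.spectral_theorem]
    simp
    rfl
  have hconj : ∀ e f : m → ℝ, (U * diagonal e * Uᵀ) * (U * diagonal f * Uᵀ)
      = U * diagonal (fun i => e i * f i) * Uᵀ := by
    intro e f
    rw [← diagonal_mul_diagonal]
    simp only [Matrix.mul_assoc]
    rw [← Matrix.mul_assoc Uᵀ U, hU, Matrix.one_mul]
  have hsymm : ∀ e : m → ℝ, (U * diagonal e * Uᵀ)ᵀ = U * diagonal e * Uᵀ := by
    intro e
    simp [Matrix.transpose_mul, Matrix.mul_assoc]
  -- Since `0⁻¹ = 0`, `d⁻¹` inverts exactly the nonzero eigenvalues.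
  refine ⟨U * diagonal d⁻¹ * Uᵀ, ?_, ?_, ?_, ?_⟩ <;>
    simp only [hconj, hsymm, Pi.inv_apply, mul_inv_mul_cancel]
  rw [show (fun i => (d i)⁻¹ * d i * (d i)⁻¹) = d⁻¹ from
    funext fun i => by simpa using mul_inv_mul_cancel (d i)⁻¹]

theorem effRes_eq_sub_of_mulVec_eq {m : Type*} [Fintype m] [DecidableEq m]
    {L : Matrix m m ℝ} (hL : Lᵀ = L) {u v : m} {w : m → ℝ}
    (hw : L *ᵥ w = Pi.single u 1 - Pi.single v 1) :
    effRes L u v = w u - w v := by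
  obtain ⟨hLBL, -⟩ := (Matrix.exists_penrose_of_transpose_eq hL).choose_spec
  rw [effRes, Matrix.mpinv, dif_pos (Matrix.exists_penrose_of_transpose_eq hL), ← hw]
  set B := (Matrix.exists_penrose_of_transpose_eq hL).choose
  calc L *ᵥ w ⬝ᵥ B *ᵥ (L *ᵥ w) = w ᵥ* L ⬝ᵥ B *ᵥ (L *ᵥ w) := by
        rw [← mulVec_transpose, hL]
    _ = w ⬝ᵥ (L * B * L) *ᵥ w := by
        rw [← dotProduct_mulVec, mulVec_mulVec, mulVec_mulVec, Matrix.mul_assoc]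
    _ = w u - w v := by rw [hLBL, hw]; simp [dotProduct_sub]

theorem resDist_eq_sub_of_lapm_mulVec_eq {V : Type*} [Fintype V] [DecidableEq V]
    (G : SimpleGraph V) {u v : V} {w : V → ℝ}
    (hw : lapm G *ᵥ w = Pi.single u 1 - Pi.single v 1) :
    resDist G u v = w u - w v :=
  letI := Classical.decRel G.Adj
  effRes_eq_sub_of_mulVec_eq (G.isSymm_lapMatrix (R := ℝ)) hw

theorem lapm_mulVec_apply_eq_sum {V : Type*} [Fintype V] [DecidableEq V] (G : SimpleGraph V)
    [DecidableRel G.Adj] (g : V → ℝ) (x : V) :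
    (lapm G *ᵥ g) x = ∑ y ∈ G.neighborFinset x, (g x - g y) := by
  rw [sum_sub_distrib, sum_const, SimpleGraph.card_neighborFinset_eq_degree, nsmul_eq_mul,
    ← SimpleGraph.lapMatrix_mulVec_apply]
  unfold lapm
  congr

open SimpleGraph in
theorem lapm_boxProd_mulVec_apply {V W : Type*} [Fintype V] [DecidableEq V] [Fintype W]
    [DecidableEq W] (G : SimpleGraph V) (H : SimpleGraph W) (F : V × W → ℝ) (x : V) (b : W) :
    (lapm (G □ H) *ᵥ F) (x, b) =
      (lapm G *ᵥ fun y => F (y, b)) x + (lapm H *ᵥ fun c => F (x, c)) b := by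
  classical
  simp only [lapm, lapMatrix_mulVec_apply, degree_boxProd, neighborFinset_boxProd,
    sum_disjUnion, sum_product, sum_singleton, Nat.cast_add]
  ring

section BoxProd

variable {V W S : Type*} [Fintype V] [DecidableEq V] [Fintype W] [DecidableEq W] [Fintype S]
  {G : SimpleGraph V} {H : SimpleGraph W}

theorem lapm_boxProd_mulVec_sum_mul {ψ : S → W → ℝ} {μ : S → ℝ}
    (hψ : ∀ s, lapm H *ᵥ ψ s = μ s • ψ s) (φ : S → V → ℝ) (x : V) (b : W) :
    (lapm (G □ H) *ᵥ fun p => ∑ s, φ s p.1 * ψ s p.2) (x, b) =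
      ∑ s, ((lapm G *ᵥ φ s) x + μ s * φ s x) * ψ s b := by
  have hG : (fun y => ∑ s, φ s y * ψ s b) = ∑ s, ψ s b • φ s := by
    ext y; simp [mul_comm]
  have hH : (fun c => ∑ s, φ s x * ψ s c) = ∑ s, φ s x • ψ s := by
    ext c; simp
  rw [lapm_boxProd_mulVec_apply, hG, hH, mulVec_sum, mulVec_sum]
  simp only [mulVec_smul, hψ, Finset.sum_apply, Pi.smul_apply, smul_eq_mul, ← sum_add_distrib]
  exact sum_congr rfl fun s _ => by ring

theorem resDist_boxProd_eq_sum {ψ : S → W → ℝ} {μ : S → ℝ} {C : ℝ} (hC : C ≠ 0)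
    (hψ : ∀ s, lapm H *ᵥ ψ s = μ s • ψ s)
    (horth : ∀ b c, ∑ s, ψ s b * ψ s c = if b = c then C else 0)
    {φ : S → V → ℝ} {u v : V} {bu bv : W}
    (hφ : ∀ s, lapm G *ᵥ φ s + μ s • φ s =
      ψ s bu • Pi.single u 1 - ψ s bv • Pi.single v 1) :
    resDist (G □ H) (u, bu) (v, bv) = C⁻¹ * ∑ s, (φ s u * ψ s bu - φ s v * ψ s bv) := by
  set F : V × W → ℝ := fun p => ∑ s, φ s p.1 * ψ s p.2
  have hF : lapm (G □ H) *ᵥ (C⁻¹ • F) = Pi.single (u, bu) 1 - Pi.single (v, bv) 1 := by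
    ext ⟨x, b⟩
    have hrow (s : S) : (lapm G *ᵥ φ s) x + μ s * φ s x =
        ψ s bu * (Pi.single u 1 : V → ℝ) x - ψ s bv * (Pi.single v 1 : V → ℝ) x := by
      simpa using congrFun (hφ s) x
    have hsum : ∑ s, ((lapm G *ᵥ φ s) x + μ s * φ s x) * ψ s b =
        (Pi.single u 1 : V → ℝ) x * ∑ s, ψ s bu * ψ s b
          - (Pi.single v 1 : V → ℝ) x * ∑ s, ψ s bv * ψ s b := by
      simp only [hrow, mul_sum, ← sum_sub_distrib]
      exact sum_congr rfl fun s _ => by ring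
    have hsingle : ∀ (y : V) (c : W), (Pi.single y 1 : V → ℝ) x * (if c = b then C else 0) =
        C * (Pi.single (y, c) 1 : V × W → ℝ) (x, b) := fun y c => by
      rcases eq_or_ne x y with rfl | hy <;> rcases eq_or_ne c b with rfl | hc <;>
        simp [*]
    rw [mulVec_smul, Pi.smul_apply, lapm_boxProd_mulVec_sum_mul hψ, hsum, horth, horth,
      hsingle, hsingle, ← mul_sub, smul_eq_mul, inv_mul_cancel_left₀ hC, Pi.sub_apply]
  rw [resDist_eq_sub_of_lapm_mulVec_eq _ hF]
  simp only [F, Pi.smul_apply, smul_eq_mul, ← mul_sub, ← sum_sub_distrib]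

end BoxProd

section Walsh

variable {ι : Type*} [Fintype ι]

def walsh (s b : ι → Bool) : ℝ := ∏ i, if s i && b i then -1 else 1

def weight (s : ι → Bool) : ℕ := #{i | s i}

theorem weight_eq_zero_iff {s : ι → Bool} : weight s = 0 ↔ s = fun _ => false := by
  simp [weight, filter_eq_empty_iff, funext_iff]

theorem walsh_of_weight_eq_zero {s : ι → Bool} (hs : weight s = 0) (b : ι → Bool) :
    walsh s b = 1 := by
  obtain rfl := weight_eq_zero_iff.mp hs
  simp [walsh]

theorem walsh_update_bnot [DecidableEq ι] (s b : ι → Bool) (i : ι) :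
    walsh s (Function.update b i (!b i)) = (if s i then -1 else 1) * walsh s b := by
  rw [walsh, walsh, ← mul_prod_erase univ _ (mem_univ i), ← mul_prod_erase univ _ (mem_univ i),
    ← mul_assoc]
  congr 1
  · cases s i <;> cases b i <;> simp
  · exact prod_congr rfl fun j hj => by rw [Function.update_of_ne (ne_of_mem_erase hj)]

theorem sum_walsh_mul_walsh [DecidableEq ι] (b c : ι → Bool) :
    ∑ s, walsh s b * walsh s c = if b = c then 2 ^ Fintype.card ι else 0 := by
  have hcoord (i : ι) :
      ∑ t : Bool, (if t && b i then (-1 : ℝ) else 1) * (if t && c i then -1 else 1) =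
        if b i = c i then 2 else 0 := by
    cases b i <;> cases c i <;> norm_num
  simp only [walsh, ← prod_mul_distrib]
  rw [← Fintype.prod_sum (fun i t => (if t && b i then (-1 : ℝ) else 1) *
    (if t && c i then -1 else 1))]
  simp only [hcoord, prod_ite_zero, mem_univ, forall_const, funext_iff, prod_const, card_univ]

theorem sum_ite_neg_one_one (s : ι → Bool) :
    ∑ i, (if s i then (-1 : ℝ) else 1) = Fintype.card ι - 2 * weight s := by
  have h : ∀ i, (if s i then (-1 : ℝ) else 1) = 1 - 2 * if s i then 1 else 0 := fun i => by
    cases s i <;> norm_num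
  rw [sum_congr rfl fun i _ => h i, sum_sub_distrib, ← mul_sum, sum_boole]
  simp [weight]

end Walsh

section Hypercube

variable {k : ℕ}

theorem hypercube_adj_iff {b c : Fin k → Bool} :
    (hypercube k).Adj b c ↔ ∃ i, c = Function.update b i (!b i) := by
  simp only [hypercube, card_eq_one, eq_singleton_iff_unique_mem, mem_filter, mem_univ, true_and]
  constructor
  · rintro ⟨i, hi, huniq⟩
    refine ⟨i, funext fun j => ?_⟩
    rcases eq_or_ne j i with rfl | hj
    · cases hb : b j <;> simp_all
    · rw [Function.update_of_ne hj]
      by_contra h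
      exact hj (huniq j (Ne.symm h))
  · rintro ⟨i, rfl⟩
    refine ⟨i, by simp, fun j hj => ?_⟩
    by_contra h
    simp [Function.update_of_ne h] at hj

theorem injective_update_bnot (b : Fin k → Bool) :
    Function.Injective fun i => Function.update b i (!b i) := by
  intro i j hij
  by_contra hne
  have := congrFun hij i
  simp [Function.update_of_ne hne] at this

theorem neighborFinset_hypercube (b : Fin k → Bool) [Fintype ((hypercube k).neighborSet b)] :
    (hypercube k).neighborFinset b = univ.image fun i => Function.update b i (!b i) := by
  ext c
  simp [hypercube_adj_iff, eq_comm]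

theorem lapm_hypercube_mulVec_walsh (s : Fin k → Bool) :
    lapm (hypercube k) *ᵥ walsh s = (2 * weight s : ℝ) • walsh s := by
  classical
  ext b
  rw [lapm, SimpleGraph.lapMatrix_mulVec_apply, ← SimpleGraph.card_neighborFinset_eq_degree,
    neighborFinset_hypercube, card_image_of_injective _ (injective_update_bnot b),
    sum_image fun i _ j _ h => injective_update_bnot b h]
  simp only [walsh_update_bnot, ← sum_mul, sum_ite_neg_one_one, card_univ, Fintype.card_fin,
    Pi.smul_apply, smul_eq_mul]
  ring

end Hypercube

section Path

variable {N : ℕ}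

theorem pathGraph_lapm_mulVec_apply (φ : ℤ → ℝ) (x : Fin N) :
    (lapm (SimpleGraph.pathGraph N) *ᵥ fun t => φ (t : ℕ)) x =
      (if 0 < (x : ℕ) then φ (x : ℕ) - φ ((x : ℕ) - 1) else 0) +
        (if (x : ℕ) + 1 < N then φ (x : ℕ) - φ ((x : ℕ) + 1) else 0) := by
  classical
  set F : ℕ → ℝ := fun y => φ (x : ℕ) - φ y
  have hsplit : ∀ y : ℕ, (if (x : ℕ) + 1 = y ∨ y + 1 = x then F y else 0) =
      (if (x : ℕ) + 1 = y then F y else 0) + (if y + 1 = x then F y else 0) := fun y => by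
    by_cases h₁ : (x : ℕ) + 1 = y <;> by_cases h₂ : y + 1 = (x : ℕ) <;> simp [h₁, h₂]
    omega
  have hlower : ∑ y ∈ range N, (if y + 1 = x then F y else 0) =
      if 0 < (x : ℕ) then φ (x : ℕ) - φ ((x : ℕ) - 1) else 0 := by
    obtain ⟨x, hx⟩ := x
    cases x with
    | zero => simp
    | succ m =>
      simp only [add_left_inj, sum_ite_eq', mem_range]
      simp [F, show m < N by omega]
  rw [lapm_mulVec_apply_eq_sum, SimpleGraph.neighborFinset_eq_filter, sum_filter]
  simp only [SimpleGraph.pathGraph_adj]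
  rw [Fin.sum_univ_eq_sum_range (fun y => if (x : ℕ) + 1 = y ∨ y + 1 = x then F y else 0),
    sum_congr rfl fun y _ => hsplit y, sum_add_distrib, sum_ite_eq, hlower, add_comm]
  simp [F]

theorem pathGraph_lapm_mulVec_add_smul {φ : ℤ → ℝ} {μ a b : ℝ}
    (hrec : ∀ y, φ (y - 1) + φ (y + 1) = (2 + μ) * φ y) (n : ℕ)
    (ha : φ (-1) - φ 0 = a) (hb : φ n - φ (n + 1) = b) :
    lapm (SimpleGraph.pathGraph (n + 1)) *ᵥ (fun t : Fin (n + 1) => φ (t : ℕ)) +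
        μ • (fun t : Fin (n + 1) => φ (t : ℕ)) =
      a • Pi.single 0 1 - b • Pi.single (Fin.last n) 1 := by
  ext ⟨x, hx⟩
  have h := hrec x
  rw [Pi.add_apply, pathGraph_lapm_mulVec_apply]
  simp only [Pi.smul_apply, Pi.sub_apply, Pi.single_apply, smul_eq_mul, Fin.ext_iff,
    Fin.val_last, Fin.val_zero, mul_ite, mul_one, mul_zero]
  rcases Nat.eq_zero_or_pos x with rfl | hx0
  · rcases Nat.eq_zero_or_pos n with rfl | hn
    · simp at h hb ⊢; linarith
    · simp [hn, hn.ne] at h ⊢; linarith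
  · rcases lt_or_eq_of_le (Nat.lt_succ_iff.mp hx) with hxn | rfl
    · simp [hx0, hxn, hx0.ne', hxn.ne]; linarith
    · simp [hx0, hx0.ne']; linarith

end Path

section Green

variable {r : ℝ}

-- For `1 < r`, the Green function of `L + r + r⁻¹ - 2` on the path `0, …, n` with source `0`.
noncomputable def pathGreen (r : ℝ) (n : ℕ) (x : ℤ) : ℝ :=
  (r ^ ((n : ℤ) + 1 - x) + r ^ (x - n)) / ((r - 1) * (r ^ (n + 1) - (r ^ (n + 1))⁻¹))

theorem pathGreen_sub_one_add_pathGreen_add_one (hr : r ≠ 0) (n : ℕ) (x : ℤ) :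
    pathGreen r n (x - 1) + pathGreen r n (x + 1) = (r + r⁻¹) * pathGreen r n x := by
  simp only [pathGreen, ← add_div, mul_div_assoc']
  congr 1
  rw [show (n : ℤ) + 1 - (x - 1) = (n + 1 - x) + 1 by ring, show x - 1 - n = (x - n) - 1 by ring,
    show (n : ℤ) + 1 - (x + 1) = (n + 1 - x) - 1 by ring, show x + 1 - n = (x - n) + 1 by ring,
    zpow_add_one₀ hr, zpow_sub_one₀ hr, zpow_sub_one₀ hr, zpow_add_one₀ hr]
  ring

theorem pathGreen_neg_one_sub_pathGreen_zero (hr : 1 < r) (n : ℕ) :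
    pathGreen r n (-1) - pathGreen r n 0 = 1 := by
  have hr0 : r ≠ 0 := by positivity
  have ht := one_lt_pow₀ hr n.add_one_ne_zero
  have hden : 0 < (r - 1) * (r ^ (n + 1) - (r ^ (n + 1))⁻¹) :=
    mul_pos (sub_pos.mpr hr) (by linarith [inv_lt_one_of_one_lt₀ ht])
  rw [pathGreen, pathGreen, div_sub_div_same, div_eq_one_iff_eq hden.ne',
    show (n : ℤ) + 1 - -1 = ((n + 1 : ℕ) : ℤ) + 1 by push_cast; ring,
    show (-1 : ℤ) - n = -((n + 1 : ℕ) : ℤ) by push_cast; ring,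
    show (n : ℤ) + 1 - 0 = ((n + 1 : ℕ) : ℤ) by push_cast; ring,
    show (0 : ℤ) - n = -((n + 1 : ℕ) : ℤ) + 1 by push_cast; ring,
    zpow_add_one₀ hr0, zpow_add_one₀ hr0, _root_.zpow_neg, zpow_natCast]
  ring

theorem pathGreen_succ_self (r : ℝ) (n : ℕ) : pathGreen r n (n + 1) = pathGreen r n n := by
  simp only [pathGreen, sub_self, add_sub_cancel_left, add_comm]

theorem pathGreen_self (r : ℝ) (n : ℕ) :
    pathGreen r n n = (r + 1) / ((r - 1) * (r ^ (n + 1) - (r ^ (n + 1))⁻¹)) := by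
  rw [pathGreen, add_sub_cancel_left, sub_self, zpow_one, zpow_zero, add_comm]

theorem pathGreen_zero (hr : 1 < r) (n : ℕ) :
    pathGreen r n 0 = (r - 1)⁻¹ + (r ^ (n + 1))⁻¹ * pathGreen r n n := by
  have hr0 : r ≠ 0 := by positivity
  have h₁ : r - 1 ≠ 0 := by linarith
  rw [pathGreen_self, pathGreen, show (n : ℤ) + 1 - 0 = ((n + 1 : ℕ) : ℤ) by push_cast; ring,
    show (0 : ℤ) - n = -((n + 1 : ℕ) : ℤ) + 1 by push_cast; ring, zpow_add_one₀ hr0,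
    _root_.zpow_neg, zpow_natCast]
  have ht := one_lt_pow₀ hr n.add_one_ne_zero
  generalize r ^ (n + 1) = t at ht ⊢
  have ht0 : t ≠ 0 := by positivity
  have h₂ : t ^ 2 - 1 ≠ 0 := by nlinarith
  field_simp
  ring

theorem tendsto_pathGreen_self (hr : 1 < r) :
    Tendsto (fun n : ℕ => pathGreen r n n) atTop (𝓝 0) := by
  have ht : Tendsto (fun n : ℕ => r ^ (n + 1)) atTop atTop :=
    (tendsto_pow_atTop_atTop_of_one_lt hr).comp (tendsto_add_atTop_nat 1)
  have hden := (ht.atTop_add (tendsto_inv_atTop_zero.comp ht).neg).const_mul_atTop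
    (sub_pos.mpr hr)
  simpa [pathGreen_self, sub_eq_add_neg] using tendsto_const_nhds.div_atTop hden

theorem tendsto_pathGreen_zero (hr : 1 < r) :
    Tendsto (fun n : ℕ => pathGreen r n 0) atTop (𝓝 (r - 1)⁻¹) := by
  have hu : Tendsto (fun n : ℕ => (r ^ (n + 1))⁻¹) atTop (𝓝 0) :=
    tendsto_inv_atTop_zero.comp
      ((tendsto_pow_atTop_atTop_of_one_lt hr).comp (tendsto_add_atTop_nat 1))
  simpa [pathGreen_zero hr] using tendsto_const_nhds.add (hu.mul (tendsto_pathGreen_self hr))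

end Green

noncomputable def greenRoot (μ : ℝ) : ℝ := 1 + μ / 2 + √(μ + μ ^ 2 / 4)

theorem one_lt_greenRoot {μ : ℝ} (hμ : 0 < μ) : 1 < greenRoot μ := by
  have := Real.sqrt_nonneg (μ + μ ^ 2 / 4)
  rw [greenRoot]
  linarith

theorem greenRoot_add_inv {μ : ℝ} (hμ : 0 ≤ μ) :
    greenRoot μ + (greenRoot μ)⁻¹ = 2 + μ := by
  have hsq := Real.sq_sqrt (by positivity : 0 ≤ μ + μ ^ 2 / 4)
  have hinv : (greenRoot μ)⁻¹ = 1 + μ / 2 - √(μ + μ ^ 2 / 4) :=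
    inv_eq_of_mul_eq_one_right (by rw [greenRoot]; linear_combination -hsq)
  rw [hinv, greenRoot]
  ring

theorem Filter.Tendsto.succ_sub_self_of_sub_mul {u : ℕ → ℝ} {a l : ℝ}
    (h : Tendsto (fun n => u n - a * n) atTop (𝓝 l)) :
    Tendsto (fun n => u (n + 1) - u n) atTop (𝓝 a) := by
  have h' := ((h.comp (tendsto_add_atTop_nat 1)).sub h).const_add a
  rw [sub_self, add_zero] at h'
  refine h'.congr fun n => ?_
  simp only [Function.comp_apply, Nat.cast_add, Nat.cast_one]
  ring

section Corner

variable {k : ℕ}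

-- Coefficient of `walsh s` in the potential of the unit current from `(0, bi)` to `(n, bj)`.
noncomputable def cornerPotential (bi bj : Fin k → Bool) (n : ℕ) (s : Fin k → Bool) (x : ℤ) :
    ℝ :=
  if weight s = 0 then -x
  else walsh s bi * pathGreen (greenRoot (2 * weight s)) n x -
    walsh s bj * pathGreen (greenRoot (2 * weight s)) n (n - x)

variable (bi bj : Fin k → Bool) (n : ℕ) (s : Fin k → Bool)

theorem cornerPotential_sub_one_add_add_one (x : ℤ) :
    cornerPotential bi bj n s (x - 1) + cornerPotential bi bj n s (x + 1) =
      (2 + 2 * weight s) * cornerPotential bi bj n s x := by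
  unfold cornerPotential
  split_ifs with hs
  · push_cast [hs]; ring
  · have hr : greenRoot (2 * weight s) ≠ 0 :=
      (zero_lt_one.trans (one_lt_greenRoot (by positivity))).ne'
    have h₁ := pathGreen_sub_one_add_pathGreen_add_one hr n x
    have h₂ := pathGreen_sub_one_add_pathGreen_add_one hr n (n - x)
    rw [greenRoot_add_inv (by positivity)] at h₁ h₂
    rw [show (n : ℤ) - (x - 1) = n - x + 1 by ring, show (n : ℤ) - (x + 1) = n - x - 1 by ring]
    linear_combination walsh s bi * h₁ - walsh s bj * h₂

theorem cornerPotential_neg_one_sub_zero :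
    cornerPotential bi bj n s (-1) - cornerPotential bi bj n s 0 = walsh s bi := by
  unfold cornerPotential
  split_ifs with hs
  · simp [walsh_of_weight_eq_zero hs]
  · have hr := one_lt_greenRoot (μ := 2 * weight s) (by positivity)
    rw [show (n : ℤ) - -1 = n + 1 by ring, sub_zero, pathGreen_succ_self]
    linear_combination walsh s bi * pathGreen_neg_one_sub_pathGreen_zero hr n

theorem cornerPotential_last_sub_succ :
    cornerPotential bi bj n s n - cornerPotential bi bj n s (n + 1) = walsh s bj := by
  unfold cornerPotential
  split_ifs with hs
  · simp [walsh_of_weight_eq_zero hs]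
  · have hr := one_lt_greenRoot (μ := 2 * weight s) (by positivity)
    rw [show (n : ℤ) - (n + 1) = -1 by ring, sub_self, pathGreen_succ_self]
    linear_combination walsh s bj * pathGreen_neg_one_sub_pathGreen_zero hr n

theorem resDist_pathGraph_boxProd_hypercube :
    resDist ((SimpleGraph.pathGraph (n + 1)).boxProd (hypercube k)) (0, bi) (Fin.last n, bj) =
      (2 ^ k)⁻¹ * ∑ s, (cornerPotential bi bj n s 0 * walsh s bi -
        cornerPotential bi bj n s n * walsh s bj) := by
  have := resDist_boxProd_eq_sum (G := SimpleGraph.pathGraph (n + 1)) (H := hypercube k)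
    (C := 2 ^ k) (pow_ne_zero k two_ne_zero) lapm_hypercube_mulVec_walsh
    (fun b c => by simpa using sum_walsh_mul_walsh b c)
    (φ := fun s t => cornerPotential bi bj n s (t : ℕ)) (u := 0) (v := Fin.last n)
    (bu := bi) (bv := bj) fun s =>
      pathGraph_lapm_mulVec_add_smul (cornerPotential_sub_one_add_add_one bi bj n s) n
        (cornerPotential_neg_one_sub_zero bi bj n s) (cornerPotential_last_sub_succ bi bj n s)
  simpa using this

theorem exists_tendsto_cornerPotential_summand :
    ∃ l, Tendsto (fun n => cornerPotential bi bj n s 0 * walsh s bi -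
      cornerPotential bi bj n s n * walsh s bj - if weight s = 0 then (n : ℝ) else 0)
      atTop (𝓝 l) := by
  by_cases hs : weight s = 0
  · refine ⟨0, tendsto_const_nhds.congr fun n => ?_⟩
    simp [cornerPotential, hs, walsh_of_weight_eq_zero hs]
  · have hr := one_lt_greenRoot (μ := 2 * weight s) (by positivity)
    have h₀ := tendsto_pathGreen_zero hr
    have hₙ := tendsto_pathGreen_self hr
    refine ⟨_, ((((h₀.const_mul (walsh s bi)).sub (hₙ.const_mul (walsh s bj))).mul_const
      (walsh s bi)).sub (((hₙ.const_mul (walsh s bi)).sub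
      (h₀.const_mul (walsh s bj))).mul_const (walsh s bj))).congr fun n => ?_⟩
    simp [cornerPotential, hs]

theorem exists_tendsto_resDist_pathGraph_boxProd_hypercube_sub :
    ∃ l, Tendsto (fun n : ℕ =>
      resDist ((SimpleGraph.pathGraph (n + 1)).boxProd (hypercube k)) (0, bi) (Fin.last n, bj) -
        1 / 2 ^ k * n) atTop (𝓝 l) := by
  choose l hl using fun s => exists_tendsto_cornerPotential_summand bi bj s
  refine ⟨_, ((tendsto_finsetSum univ fun s _ => hl s).const_mul (2 ^ k)⁻¹).congr
    fun n => ?_⟩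
  simp only [resDist_pathGraph_boxProd_hypercube, sum_sub_distrib, weight_eq_zero_iff,
    sum_ite_eq', mem_univ, if_true]
  ring

end Corner

/-- In `U_n = P_n □ Q_k`, the corner-to-corner resistance distances grow with
successive differences tending to `1/2ᵏ`. -/
theorem tendsto_resDist_path_boxProd_hypercube (k : ℕ) (bi bj : Fin k → Bool) :
    Filter.Tendsto (fun n : ℕ =>
        resDist ((SimpleGraph.pathGraph (n + 2)).boxProd (hypercube k))
            (⟨0, by omega⟩, bi) (Fin.last (n + 1), bj)
          - resDist ((SimpleGraph.pathGraph (n + 1)).boxProd (hypercube k))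
              (⟨0, by omega⟩, bi) (Fin.last n, bj))
      Filter.atTop (nhds (1 / 2 ^ k)) := by
  obtain ⟨l, hl⟩ := exists_tendsto_resDist_pathGraph_boxProd_hypercube_sub bi bj
  exact hl.succ_sub_self_of_sub_mul
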